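/- Let τ ∈ ℂ with Im τ > 0. The complex vector space of entire functions Θ : ℂ → ℂ satisfying Θ(z + π) = Θ(z) and Θ(z + πτ) = e^{-2inz} e^{-inπτ} Θ(z) has dimension n over ℂ. -/

import Mathlib

noncomputable section
open Complex Real

/-- The space of entire functions `Θ : ℂ → ℂ` satisfying the quasi-periodicity
conditions `Θ(z + π) = Θ(z)` and `Θ(z + πτ) = e^{-2inz} e^{-inπτ} Θ(z)`. -/
def thetaSpace (n : ℕ) (τ : ℂ) : Submodule ℂ (ℂ → ℂ) where
  carrier := {Θ | Differentiable ℂ Θ ∧ (∀ z, Θ (z + π) = Θ z) ∧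
    (∀ z, Θ (z + π * τ) = Complex.exp (-2 * I * n * z) * Complex.exp (-I * n * π * τ) * Θ z)}
  add_mem' := by
    rintro f g ⟨hf, hf1, hf2⟩ ⟨hg, hg1, hg2⟩
    refine ⟨hf.add hg, fun z => by simp [Pi.add_apply, hf1 z, hg1 z],
      fun z => by simp only [Pi.add_apply, hf2 z, hg2 z]; ring⟩
  zero_mem' := ⟨differentiable_const 0, fun z => rfl, fun z => by simp⟩
  smul_mem' := by
    rintro c f ⟨hf, hf1, hf2⟩
    refine ⟨hf.const_smul c, fun z => by simp [Pi.smul_apply, hf1 z],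
      fun z => by simp only [Pi.smul_apply, hf2 z, smul_eq_mul]; ring⟩

/-!
Restricted to `ℝ`, a theta function `Θ` is `π`-periodic; its Fourier coefficients `c m` determine
it, by Fourier uniqueness on `ℝ/πℤ` and then the identity theorem. Integrating `e^{-2imz} Θ(z)`
over `[0, π]` and over `[0, π] + πτ` gives the same value by Cauchy's theorem, whence
`c (m + n) = e^{iπτ(2m+n)} c m`; so `Θ ↦ (c 0, …, c (n-1))` is injective. It is surjective because
`θ_j(z) = e^{2ijz} ϑ(nz/π + jτ, nτ)` is a theta function with `c m = δ_{jm}` for `0 ≤ m < n`.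
-/

open MeasureTheory Topology

namespace ThetaSpace

theorem int_mul_add_ne_of_lt {n j m : ℕ} {k : ℤ} (hk : k ≠ 0) (hj : j < n) (hm : m < n) :
    k * n + j ≠ m := by
  intro h
  have hdvd : (n : ℤ) ∣ m - j := ⟨k, by rw [← h]; ring⟩
  have hmj : (m : ℤ) - j = 0 := Int.eq_zero_of_abs_lt_dvd hdvd (by rw [abs_lt]; omega)
  have : k * n = 0 := by omega
  simp_all

theorem intervalIntegral_comp_add_of_periodic {g : ℂ → ℂ} {T : ℝ} (hg : Differentiable ℂ g)
    (hT : ∀ z, g (z + T) = g z) (a : ℂ) :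
    ∫ x in (0 : ℝ)..T, g (x + a) = ∫ x in (0 : ℝ)..T, g x := by
  have hper : Function.Periodic (fun x : ℝ => g (x + a.im * I)) T := fun x => by
    simpa only [ofReal_add, add_right_comm] using hT (x + a.im * I)
  -- Cauchy's theorem on `[0, T] × [0, Im a]`; the vertical sides cancel by periodicity
  have hrect := integral_boundary_rect_eq_zero_of_differentiableOn g 0 ⟨T, a.im⟩ hg.differentiableOn
  have hsides : ∫ y in (0 : ℝ)..a.im, g (T + y * I) = ∫ y in (0 : ℝ)..a.im, g (0 + y * I) := by
    simp only [zero_add, add_comm (T : ℂ), hT]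
  simp only [zero_re, zero_im, ofReal_zero, zero_mul, add_zero] at hrect
  rw [hsides] at hrect
  calc ∫ x in (0 : ℝ)..T, g (x + a)
      = ∫ x in (0 : ℝ)..T, g (↑(x + a.re) + a.im * I) := by
        simp only [ofReal_add, add_assoc, re_add_im]
    _ = ∫ x in (0 : ℝ)..T, g (x + a.im * I) := by
        rw [intervalIntegral.integral_comp_add_right (fun x : ℝ => g (x + a.im * I)), zero_add,
          add_comm T, hper.intervalIntegral_add_eq a.re 0, zero_add]
    _ = ∫ x in (0 : ℝ)..T, g x := by linear_combination -hrect

section AddCircle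

variable {T : ℝ} [Fact (0 < T)]

def fourierCoeffCLM (m : ℤ) : C(AddCircle T, ℂ) →L[ℂ] ℂ :=
  lp.evalCLM ℂ (fun _ : ℤ => ℂ) 2 m ∘L
    fourierBasis.repr.toContinuousLinearEquiv.toContinuousLinearMap ∘L
      ContinuousMap.toLp 2 AddCircle.haarAddCircle ℂ

theorem fourierCoeffCLM_apply (m : ℤ) (F : C(AddCircle T, ℂ)) :
    fourierCoeffCLM m F = fourierCoeff F m := by
  rw [← fourierCoeff_toLp, ← fourierBasis_repr]
  rfl

theorem eq_zero_of_fourierCoeff_eq_zero {F : C(AddCircle T, ℂ)}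
    (h : ∀ m, fourierCoeff F m = 0) : F = 0 := by
  have hF : fourierCoeff F = 0 := funext h
  ext x
  have hsum := has_pointwise_sum_fourier_series_of_summable (by rw [hF]; exact summable_zero) x
  simp only [hF, Pi.zero_apply, zero_smul] at hsum
  exact hsum.unique hasSum_zero

end AddCircle

theorem eq_zero_of_forall_ofReal_eq_zero {f : ℂ → ℂ} (hf : Differentiable ℂ f)
    (h : ∀ x : ℝ, f x = 0) : f = 0 := by
  have hreal : Filter.Tendsto ((↑) : ℝ → ℂ) (𝓝[≠] 0) (𝓝[≠] 0) :=
    continuous_ofReal.continuousWithinAt.tendsto_nhdsWithin fun _ hx => ofReal_ne_zero.mpr hx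
  have hfreq : ∃ᶠ z in 𝓝[≠] (0 : ℂ), f z = 0 :=
    hreal.frequently (Filter.Frequently.of_forall h)
  have hA : AnalyticOnNhd ℂ f Set.univ := hf.differentiableOn.analyticOnNhd isOpen_univ
  funext z
  exact hA.eqOn_zero_of_preconnected_of_frequently_eq_zero isPreconnected_univ (Set.mem_univ 0)
    hfreq (Set.mem_univ z)

instance : Fact (0 < π) := ⟨pi_pos⟩

theorem mem_thetaSpace {n : ℕ} {τ : ℂ} {f : ℂ → ℂ} : f ∈ thetaSpace n τ ↔
    Differentiable ℂ f ∧ (∀ z, f (z + π) = f z) ∧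
      ∀ z, f (z + π * τ) = cexp (-2 * I * n * z) * cexp (-I * n * π * τ) * f z :=
  Iff.rfl

variable {n : ℕ} {τ : ℂ}

def toCircle (n : ℕ) (τ : ℂ) : thetaSpace n τ →ₗ[ℂ] C(AddCircle π, ℂ) where
  toFun f :=
    { toFun := Function.Periodic.lift (f := fun x : ℝ => (f : ℂ → ℂ) x) fun x => by
        simpa using f.2.2.1 x
      continuous_toFun := (f.2.1.continuous.comp continuous_ofReal).quotient_liftOn' _ }
  map_add' f g := by
    ext x
    induction x using QuotientAddGroup.induction_on
    rfl
  map_smul' c f := by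
    ext x
    induction x using QuotientAddGroup.induction_on
    rfl

@[simp]
theorem toCircle_coe (f : thetaSpace n τ) (x : ℝ) : toCircle n τ f x = (f : ℂ → ℂ) x :=
  rfl

theorem fourierCoeff_toCircle (f : thetaSpace n τ) (m : ℤ) :
    fourierCoeff (toCircle n τ f) m =
      (1 / π) * ∫ x in (0 : ℝ)..π, cexp (-2 * I * m * x) * (f : ℂ → ℂ) x := by
  rw [fourierCoeff_eq_intervalIntegral _ m 0, zero_add, real_smul, ofReal_div, ofReal_one]
  congr 1
  refine intervalIntegral.integral_congr fun x _ => ?_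
  rw [toCircle_coe, fourier_coe_apply, smul_eq_mul]
  congr 2
  field_simp
  push_cast
  ring

theorem fourierCoeff_toCircle_add_nat (f : thetaSpace n τ) (m : ℤ) :
    fourierCoeff (toCircle n τ f) (m + n) =
      cexp (I * π * τ * (2 * m + n)) * fourierCoeff (toCircle n τ f) m := by
  obtain ⟨hd, hπ, hπτ⟩ := mem_thetaSpace.mp f.2
  set g : ℂ → ℂ := fun z => cexp (-2 * I * m * z) * (f : ℂ → ℂ) z with hg_def
  have hg : Differentiable ℂ g := (by fun_prop : Differentiable ℂ fun z => cexp _).mul hd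
  have hgπ : ∀ z, g (z + π) = g z := fun z => by
    simp only [hg_def]
    rw [hπ, show -2 * I * m * (z + π) = -2 * I * m * z + (-m : ℤ) * (2 * π * I) by
      push_cast; ring, Complex.exp_add, exp_int_mul_two_pi_mul_I, mul_one]
  have hgπτ : ∀ z, g (z + π * τ) =
      cexp (-(I * π * τ * (2 * m + n))) * (cexp (-2 * I * ↑(m + n : ℤ) * z) * (f : ℂ → ℂ) z) :=
    fun z => by
      simp only [hg_def]
      rw [hπτ]
      simp only [← mul_assoc, ← Complex.exp_add]
      congr 2
      push_cast
      ring
  have key := intervalIntegral_comp_add_of_periodic hg hgπ (π * τ)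
  simp only [hgπτ, intervalIntegral.integral_const_mul] at key
  rw [fourierCoeff_toCircle, fourierCoeff_toCircle, ← key, Complex.exp_neg]
  field_simp

theorem fourierCoeff_toCircle_eq_zero (hn : 0 < n) (f : thetaSpace n τ)
    (h : ∀ j < n, fourierCoeff (toCircle n τ f) j = 0) (m : ℤ) :
    fourierCoeff (toCircle n τ f) m = 0 := by
  have hper : Function.Periodic (fun m : ℤ => fourierCoeff (toCircle n τ f) m = 0) n := fun m => by
    simp only [fourierCoeff_toCircle_add_nat, mul_eq_zero, Complex.exp_ne_zero, false_or]
  have hmod := hper.sub_int_mul_eq (x := m) (m / n)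
  rw [mul_comm, Int.cast_id, ← Int.emod_def] at hmod
  have hlt : m % n < n := Int.emod_lt_of_pos m (by omega)
  obtain ⟨j, hj⟩ := Int.eq_ofNat_of_zero_le (Int.emod_nonneg m (by omega : (n : ℤ) ≠ 0))
  rw [← hmod, hj]
  exact h j (by omega)

def fourierCoeffs (n : ℕ) (τ : ℂ) : thetaSpace n τ →ₗ[ℂ] (Fin n → ℂ) :=
  LinearMap.pi fun j => (fourierCoeffCLM (T := π) j).toLinearMap ∘ₗ toCircle n τ

theorem fourierCoeffs_apply (f : thetaSpace n τ) (j : Fin n) :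
    fourierCoeffs n τ f j = fourierCoeff (toCircle n τ f) j :=
  fourierCoeffCLM_apply _ _

theorem fourierCoeffs_injective (hn : 0 < n) : Function.Injective (fourierCoeffs n τ) := by
  refine (injective_iff_map_eq_zero _).mpr fun f hf => ?_
  have hcoeff := fourierCoeff_toCircle_eq_zero hn f fun j hj => by
    simpa only [fourierCoeffs_apply, Pi.zero_apply] using congrFun hf ⟨j, hj⟩
  have hcircle := eq_zero_of_fourierCoeff_eq_zero hcoeff
  exact Subtype.ext <| eq_zero_of_forall_ofReal_eq_zero (mem_thetaSpace.mp f.2).1 fun x => by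
    simpa using DFunLike.congr_fun hcircle (x : AddCircle π)

def thetaFun (n : ℕ) (τ : ℂ) (j : ℕ) (z : ℂ) : ℂ :=
  cexp (2 * I * j * z) * jacobiTheta₂ (n * z / π + j * τ) (n * τ)

theorem natCast_mul_im_pos (hn : 0 < n) (hτ : 0 < τ.im) : 0 < (n * τ).im := by
  simpa using mul_pos (Nat.cast_pos.mpr hn) hτ

theorem thetaFun_mem (hn : 0 < n) (hτ : 0 < τ.im) (j : ℕ) : thetaFun n τ j ∈ thetaSpace n τ := by
  have hnτ := natCast_mul_im_pos hn hτ
  refine ⟨fun z => ?_, fun z => ?_, fun z => ?_⟩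
  · exact ((by fun_prop : Differentiable ℂ fun z => cexp _) z).mul
      ((differentiableAt_jacobiTheta₂_fst _ hnτ).comp z (by fun_prop))
  · have hper (w : ℂ) : jacobiTheta₂ (w + n) (n * τ) = jacobiTheta₂ w (n * τ) := by
      have h1 : Function.Periodic (jacobiTheta₂ · (n * τ)) 1 := (jacobiTheta₂_add_left · _)
      simpa using h1.nat_mul n w
    rw [thetaFun, thetaFun, show n * (z + π) / π + j * τ = (n * z / π + j * τ) + n by
      field_simp; ring, hper, show 2 * I * j * (z + π) = 2 * I * j * z + (j : ℤ) * (2 * π * I) by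
      push_cast; ring, Complex.exp_add, exp_int_mul_two_pi_mul_I, mul_one]
  · rw [thetaFun, thetaFun, show n * (z + π * τ) / π + j * τ = (n * z / π + j * τ) + n * τ by
      field_simp; ring, jacobiTheta₂_add_left']
    simp only [← mul_assoc, ← Complex.exp_add]
    congr 2
    field_simp
    ring

theorem hasSum_toCircle_thetaFun (hn : 0 < n) (hτ : 0 < τ.im) (j : ℕ) :
    HasSum (fun k : ℤ => jacobiTheta₂_term k (j * τ) (n * τ) • fourier (k * n + j))
      (toCircle n τ ⟨thetaFun n τ j, thetaFun_mem hn hτ j⟩) := by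
  have hnτ := natCast_mul_im_pos hn hτ
  have hsum : Summable fun k : ℤ =>
      jacobiTheta₂_term k (j * τ) (n * τ) • fourier (T := π) (k * n + j) := by
    refine Summable.of_norm ?_
    simpa only [norm_smul, fourier_norm, mul_one] using
      ((summable_jacobiTheta₂_term_iff _ _).mpr hnτ).norm
  convert hsum.hasSum
  ext x
  induction x using QuotientAddGroup.induction_on with | H x => ?_
  rw [← ContinuousMap.tsum_apply hsum, toCircle_coe, Subtype.coe_mk, thetaFun,
    ← (hasSum_jacobiTheta₂_term _ hnτ).tsum_eq, ← tsum_mul_left]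
  refine tsum_congr fun k => ?_
  rw [ContinuousMap.smul_apply, fourier_coe_apply, smul_eq_mul, jacobiTheta₂_term,
    jacobiTheta₂_term, ← Complex.exp_add, ← Complex.exp_add]
  congr 1
  field_simp
  push_cast
  ring

theorem fourierCoeff_toCircle_thetaFun (hn : 0 < n) (hτ : 0 < τ.im) {j m : ℕ} (hj : j < n)
    (hm : m < n) :
    fourierCoeff (toCircle n τ ⟨thetaFun n τ j, thetaFun_mem hn hτ j⟩) m =
      if m = j then 1 else 0 := by
  have H := (hasSum_toCircle_thetaFun hn hτ j).mapL (fourierCoeffCLM (m : ℤ))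
  simp only [map_smul, fourierCoeffCLM_apply, fourierCoeff_fourier, Pi.single_apply,
    smul_eq_mul] at H
  refine H.unique ((hasSum_single 0 fun k hk => ?_).trans_eq ?_)
  · simp [(int_mul_add_ne_of_lt hk hj hm).symm]
  · simp [jacobiTheta₂_term, eq_comm]

theorem fourierCoeffs_thetaFun (hn : 0 < n) (hτ : 0 < τ.im) (i : Fin n) :
    fourierCoeffs n τ ⟨thetaFun n τ i, thetaFun_mem hn hτ i⟩ = Pi.single i 1 := by
  funext j
  simp only [fourierCoeffs_apply, fourierCoeff_toCircle_thetaFun hn hτ i.2 j.2, Pi.single_apply,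
    Fin.val_inj]

theorem fourierCoeffs_surjective (hn : 0 < n) (hτ : 0 < τ.im) :
    Function.Surjective (fourierCoeffs n τ) := by
  rw [← LinearMap.range_eq_top, eq_top_iff, ← (Pi.basisFun ℂ (Fin n)).span_eq, Submodule.span_le]
  rintro _ ⟨i, rfl⟩
  exact ⟨_, by rw [fourierCoeffs_thetaFun hn hτ, Pi.basisFun_apply]⟩

end ThetaSpace

open ThetaSpace in
/-- For `n ≥ 1` and `Im τ > 0`, the space of such theta functions has complex
dimension `n`. -/
theorem thetaSpace_finrank (n : ℕ) (hn : 0 < n) (τ : ℂ) (hτ : 0 < τ.im) :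
    Module.finrank ℂ (thetaSpace n τ) = n := by
  let e := LinearEquiv.ofBijective (fourierCoeffs n τ)
    ⟨fourierCoeffs_injective hn, fourierCoeffs_surjective hn hτ⟩
  rw [e.finrank_eq, Module.finrank_fin_fun]
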